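/- Let r ≥ 1, let β ∈ ℂ with β not a nonpositive integer (β ∉ {0,−1,−2,…}), let c_0,…,c_{r−1} be nonzero, pairwise distinct complex numbers with |c_ℓ| < 1 for all ℓ, and let n = (n_0,…,n_{r−1}) ∈ ℕ^r. Then for every ℓ ∈ {0,…,r−1} and every j with 0 ≤ j ≤ n_ℓ−1, the series Σ_{k=0}^∞ M^{β,c}_n(k)·(−k)_j·Γ(k+β)·c_ℓ^k/k! converges absolutely and its sum equals 0. -/

import Mathlib

/-- The rising Pochhammer symbol `(y)_m = y(y+1)⋯(y+m-1)`. -/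
noncomputable def poch (y : ℂ) (m : ℕ) : ℂ := ∏ i ∈ Finset.range m, (y + i)

/-- The explicit type II Meixner--Angelesco polynomial of the first kind
(as a function of `x = z^r`). -/
noncomputable def meixnerAngelesco (r : ℕ) (β : ℂ) (c : Fin r → ℂ) (n : Fin r → ℕ)
    (x : ℂ) : ℂ :=
  ∑ k ∈ Fintype.piFinset (fun i : Fin r => Finset.range (n i + 1)),
    (∏ ℓ : Fin r, ((n ℓ).choose (k ℓ) : ℂ) * (c ℓ) ^ (n ℓ - k ℓ) / (c ℓ - 1) ^ (n ℓ)) *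
      poch (-x) (∑ i, k i) * poch (x + β) ((∑ i, n i) - ∑ i, k i)

/-!
Expanding `M_n(k)` by its definition, the series splits into finitely many series indexed by the
multi-indices `κ`, with summands `(-k)_s (k+β)_{N-s} (-k)_j Γ(k+β) c^k / k!`, where `s = |κ|` and
`N = |n|`. Such a summand vanishes for `k < s`, and the shift `k = m + s` turns it into
`(-1)^(m+j) Γ(m+β+N) / m! · (m+s)^{(j)} (-c)^(m+s)` (falling factorial), whose first factor no
longer depends on `κ`. For fixed `m`, the sum over `κ` of the remaining factors, weighted by the
coefficients of `M_n`, is `t^j (d/dt)^j [t^m P(t)]` at `t = -c_ℓ`, where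
`P(t) = ∏_ℓ ((t + c_ℓ) / (c_ℓ - 1))^(n_ℓ)`; it vanishes since `-c_ℓ` is a root of `P` of
multiplicity `n_ℓ > j`. All series converge absolutely because `Γ(k+β) / k!` grows polynomially
and `|c_ℓ| < 1`.
-/

open Finset Polynomial Asymptotics Filter

lemma poch_eq_eval_ascPochhammer (y : ℂ) (m : ℕ) : poch y m = (ascPochhammer ℂ m).eval y := by
  induction m with
  | zero => simp [poch]
  | succ m ih => simp [poch, prod_range_succ, ← ih, ascPochhammer_succ_right]

lemma poch_neg_natCast (x s : ℕ) : poch (-x) s = (-1) ^ s * x.descFactorial s := by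
  rw [poch_eq_eval_ascPochhammer, ascPochhammer_eval_neg_eq_descPochhammer,
    descPochhammer_eval_eq_descFactorial]

lemma poch_neg_natCast_eq_zero {x s : ℕ} (h : x < s) : poch (-x) s = 0 := by
  rw [poch_neg_natCast, Nat.descFactorial_eq_zero_iff_lt.mpr h, Nat.cast_zero, mul_zero]

lemma Gamma_add_natCast_eq_mul_poch {z : ℂ} (hz : ∀ m : ℕ, z ≠ -m) (b : ℕ) :
    Complex.Gamma (z + b) = Complex.Gamma z * poch z b := by
  rw [poch_eq_eval_ascPochhammer, ← Complex.Gamma_add_nat_div_Gamma_eq z hz,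
    mul_div_cancel₀ _ (Complex.Gamma_ne_zero hz)]

lemma norm_poch_le (y : ℂ) (m : ℕ) : ‖poch y m‖ ≤ ∏ i ∈ range m, (‖y‖ + i) := by
  rw [poch, norm_prod]
  gcongr with i
  exact (norm_add_le _ _).trans_eq (by simp)

lemma isBigO_poch {y : ℕ → ℂ} (hy : y =O[atTop] (fun k => (k : ℝ))) (m : ℕ) :
    (fun k => poch (y k) m) =O[atTop] (fun k => (k : ℝ) ^ m) := by
  have hconst (i : ℕ) : (fun _ : ℕ => (i : ℂ)) =O[atTop] (fun k => (k : ℝ)) :=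
    (isLittleO_const_id_atTop (i : ℂ)).isBigO.natCast_atTop
  simpa [poch, prod_const] using
    IsBigO.finsetProd (s := range m) fun i _ => hy.add (hconst i)

noncomputable def meixnerWeight (β c : ℂ) (k : ℕ) : ℂ :=
  Complex.Gamma (k + β) * c ^ k / k.factorial

lemma norm_Gamma_natCast_add_div_factorial_le {β : ℂ} (hβ : ∀ m : ℕ, β ≠ -m) (k : ℕ) :
    ‖Complex.Gamma (k + β) / k.factorial‖ ≤
      ‖Complex.Gamma β‖ * ((⌈‖β‖⌉₊ + k : ℕ) : ℝ) ^ ⌈‖β‖⌉₊ := by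
  set M := ⌈‖β‖⌉₊
  have hpoch : ‖poch β k‖ ≤ k.factorial * ((M + k : ℕ) : ℝ) ^ M := calc
    ‖poch β k‖ ≤ ∏ i ∈ range k, (‖β‖ + i) := norm_poch_le β k
    _ ≤ ∏ i ∈ range k, ((M + 1 + i : ℕ) : ℝ) := by
      gcongr with i; push_cast; linarith [Nat.le_ceil ‖β‖]
    _ = k.factorial * (M + k).choose M := by
      rw [← Nat.cast_prod, ← Nat.ascFactorial_eq_prod_range,
        Nat.ascFactorial_eq_factorial_mul_choose, Nat.choose_symm_add]
      norm_cast
    _ ≤ k.factorial * ((M + k : ℕ) : ℝ) ^ M := by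
      gcongr; exact_mod_cast Nat.choose_le_pow _ _
  rw [add_comm, Gamma_add_natCast_eq_mul_poch hβ, norm_div, norm_mul, Complex.norm_natCast,
    mul_div_assoc]
  gcongr
  rwa [div_le_iff₀' (by positivity)]

lemma isBigO_Gamma_natCast_add_div_factorial {β : ℂ} (hβ : ∀ m : ℕ, β ≠ -m) :
    (fun k : ℕ => Complex.Gamma (k + β) / k.factorial) =O[atTop]
      (fun k => (k : ℝ) ^ ⌈‖β‖⌉₊) := by
  have hlin : (fun k : ℕ => ((⌈‖β‖⌉₊ + k : ℕ) : ℝ)) =O[atTop] (fun k => (k : ℝ)) := by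
    push_cast
    exact ((isLittleO_const_id_atTop _).isBigO.natCast_atTop).add (isBigO_refl _ _)
  refine IsBigO.trans ?_ ((hlin.pow _).const_mul_left ‖Complex.Gamma β‖)
  exact isBigO_of_le _ fun k => (norm_Gamma_natCast_add_div_factorial_le hβ k).trans
    (le_abs_self _)

lemma summable_mul_meixnerWeight {β c : ℂ} (hβ : ∀ m : ℕ, β ≠ -m) (hc : ‖c‖ < 1)
    {f : ℕ → ℂ} {E : ℕ} (hf : f =O[atTop] (fun k => (k : ℝ) ^ E)) :
    Summable (fun k => f k * meixnerWeight β c k) := by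
  have hpow : (fun k : ℕ => c ^ k) =O[atTop] (fun k => ‖c‖ ^ k) :=
    isBigO_of_le _ fun k => by simp
  have hbound := (hf.mul (isBigO_Gamma_natCast_add_div_factorial hβ)).mul hpow
  refine summable_of_isBigO_nat
    (summable_pow_mul_geometric_of_norm_lt_one (E + ⌈‖β‖⌉₊) (r := ‖c‖) (by simpa using hc))
    (hbound.congr (fun k => ?_) (fun k => ?_))
  · simp only [meixnerWeight]; ring
  · ring

lemma summable_poch_mul_meixnerWeight {β c : ℂ} (hβ : ∀ m : ℕ, β ≠ -m) (hc : ‖c‖ < 1)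
    (s b j : ℕ) :
    Summable (fun k : ℕ => poch (-k) s * poch (k + β) b * poch (-k) j * meixnerWeight β c k) := by
  have hneg : (fun k : ℕ => -(k : ℂ)) =O[atTop] (fun k => (k : ℝ)) :=
    isBigO_of_le _ fun k => by simp
  have hshift : (fun k : ℕ => (k : ℂ) + β) =O[atTop] (fun k => (k : ℝ)) :=
    (isBigO_of_le _ fun k => by simp).add (isLittleO_const_id_atTop β).isBigO.natCast_atTop
  refine summable_mul_meixnerWeight (E := s + b + j) hβ hc
    ((((isBigO_poch hneg s).mul (isBigO_poch hshift b)).mul (isBigO_poch hneg j)).congr_right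
      fun k => by ring)

lemma eval_X_pow_mul_iterate_derivative_sum_C_mul_X_pow {R ι : Type*} [CommRing R]
    (s : Finset ι) (a : ι → R) (e : ι → ℕ) (i : ℕ) (t : R) :
    (X ^ i * derivative^[i] (∑ κ ∈ s, C (a κ) * X ^ e κ)).eval t =
      ∑ κ ∈ s, a κ * ((e κ).descFactorial i * t ^ e κ) := by
  simp only [iterate_derivative_sum, iterate_derivative_C_mul,
    iterate_derivative_X_pow_eq_natCast_mul, eval_mul, eval_finsetSum, mul_sum]
  refine sum_congr rfl fun κ _ => ?_
  rcases le_or_gt i (e κ) with h | h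
  · simp only [eval_pow, eval_X, eval_C, eval_natCast]
    rw [mul_left_comm, mul_left_comm (t ^ i), ← pow_add, Nat.add_sub_cancel' h]
  · simp [Nat.descFactorial_eq_zero_iff_lt.mpr h]

lemma sum_mul_descFactorial_mul_pow_eq_zero {R ι : Type*} [CommRing R]
    (s : Finset ι) (a : ι → R) (e : ι → ℕ) {t : R} {n i : ℕ}
    (hdvd : (X - C t) ^ n ∣ ∑ κ ∈ s, C (a κ) * X ^ e κ) (hi : i < n) :
    ∑ κ ∈ s, a κ * ((e κ).descFactorial i * t ^ e κ) = 0 := by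
  obtain ⟨q, hq⟩ := pow_sub_dvd_iterate_derivative_of_pow_dvd i hdvd
  rw [← eval_X_pow_mul_iterate_derivative_sum_C_mul_X_pow, hq]
  simp [Nat.sub_ne_zero_of_lt hi]

noncomputable def meixnerAngelescoCoeff {ι : Type*} [Fintype ι] (c : ι → ℂ) (n k : ι → ℕ) : ℂ :=
  ∏ ℓ, ((n ℓ).choose (k ℓ) : ℂ) * c ℓ ^ (n ℓ - k ℓ) / (c ℓ - 1) ^ n ℓ

lemma X_pow_mul_prod_eq_sum_meixnerAngelescoCoeff {ι : Type*} [Fintype ι] [DecidableEq ι]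
    (c : ι → ℂ) (n : ι → ℕ) (m : ℕ) :
    X ^ m * ∏ ℓ, C ((c ℓ - 1) ^ n ℓ)⁻¹ * (X + C (c ℓ)) ^ n ℓ =
      ∑ κ ∈ Fintype.piFinset (fun ℓ => range (n ℓ + 1)),
        C (meixnerAngelescoCoeff c n κ) * X ^ (m + ∑ ℓ, κ ℓ) := by
  have hbinom (ℓ : ι) : C ((c ℓ - 1) ^ n ℓ)⁻¹ * (X + C (c ℓ)) ^ n ℓ =
      ∑ k ∈ range (n ℓ + 1),
        C (((n ℓ).choose k : ℂ) * c ℓ ^ (n ℓ - k) / (c ℓ - 1) ^ n ℓ) * X ^ k := by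
    rw [add_pow, mul_sum]
    refine sum_congr rfl fun k _ => ?_
    simp only [C_mul, C_pow, div_eq_mul_inv, C_eq_natCast]
    ring
  simp only [hbinom, prod_univ_sum, mul_sum, meixnerAngelescoCoeff, map_prod, prod_mul_distrib,
    prod_pow_eq_pow_sum, pow_add]
  refine sum_congr rfl fun κ _ => ?_
  ring

lemma sum_meixnerAngelescoCoeff_mul_descFactorial_mul_pow_eq_zero {ι : Type*} [Fintype ι]
    [DecidableEq ι] (c : ι → ℂ) (n : ι → ℕ) {ℓ : ι} {j : ℕ} (hj : j < n ℓ) (m : ℕ) :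
    ∑ κ ∈ Fintype.piFinset (fun ℓ => range (n ℓ + 1)), meixnerAngelescoCoeff c n κ *
      ((m + ∑ i, κ i).descFactorial j * (-c ℓ) ^ (m + ∑ i, κ i)) = 0 := by
  refine sum_mul_descFactorial_mul_pow_eq_zero _ _ _ ?_ hj
  rw [← X_pow_mul_prod_eq_sum_meixnerAngelescoCoeff, C_neg, sub_neg_eq_add]
  exact dvd_mul_of_dvd_right ((dvd_mul_left _ _).trans (dvd_prod_of_mem _ (mem_univ ℓ))) _

lemma poch_mul_meixnerWeight_natCast_add {β : ℂ} (hβ : ∀ m : ℕ, β ≠ -m) (c : ℂ) {s N : ℕ}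
    (hs : s ≤ N) (j m : ℕ) :
    poch (-((m + s : ℕ) : ℂ)) s * poch ((m + s : ℕ) + β) (N - s) * poch (-((m + s : ℕ) : ℂ)) j *
        meixnerWeight β c (m + s) =
      (-1) ^ (m + j) * (Complex.Gamma (m + β + N) / m.factorial) *
        ((m + s).descFactorial j * (-c) ^ (m + s)) := by
  have hz : ∀ i : ℕ, ((m + s : ℕ) + β : ℂ) ≠ -i := fun i h =>
    hβ (m + s + i) (by push_cast at h ⊢; linear_combination h)
  have hGamma : Complex.Gamma ((m + s : ℕ) + β) * poch ((m + s : ℕ) + β) (N - s) =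
      Complex.Gamma (m + β + N) := by
    rw [← Gamma_add_natCast_eq_mul_poch hz]
    congr 1
    push_cast [Nat.cast_sub hs]
    ring
  have hfact : ((m + s).descFactorial s : ℂ) * m.factorial = (m + s).factorial := by
    rw [mul_comm]
    exact_mod_cast Nat.add_sub_cancel m s ▸ Nat.factorial_mul_descFactorial (Nat.le_add_left s m)
  have hdesc : ((m + s).descFactorial s : ℂ) ≠ 0 := by
    exact_mod_cast (Nat.descFactorial_pos.mpr (Nat.le_add_left s m)).ne'
  have hsign : (-1 : ℂ) ^ (m + j) * (-1) ^ (m + s) = (-1) ^ (s + j) := by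
    rw [← pow_add, show m + j + (m + s) = 2 * m + (s + j) by ring, pow_add, pow_mul]
    simp
  calc _ = (-1) ^ (s + j) * (Complex.Gamma ((m + s : ℕ) + β) * poch ((m + s : ℕ) + β) (N - s)) *
        (m + s).descFactorial j * c ^ (m + s) / m.factorial := by
        rw [meixnerWeight, poch_neg_natCast, poch_neg_natCast, ← hfact]
        field_simp
        ring
    _ = _ := by
        rw [hGamma, neg_pow c, ← hsign]
        ring

lemma hasSum_poch_mul_meixnerWeight {β c : ℂ} (hβ : ∀ m : ℕ, β ≠ -m) (hc : ‖c‖ < 1) {s N : ℕ}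
    (hs : s ≤ N) (j : ℕ) :
    HasSum (fun m : ℕ => (-1) ^ (m + j) * (Complex.Gamma (m + β + N) / m.factorial) *
        ((m + s).descFactorial j * (-c) ^ (m + s)))
      (∑' k : ℕ, poch (-k) s * poch (k + β) (N - s) * poch (-k) j * meixnerWeight β c k) := by
  have hsum := (summable_poch_mul_meixnerWeight hβ hc s (N - s) j).hasSum
  rw [← hasSum_nat_add_iff' s, sum_eq_zero fun k hk => by
    rw [poch_neg_natCast_eq_zero (mem_range.mp hk), zero_mul, zero_mul, zero_mul], sub_zero] at hsum
  simpa only [poch_mul_meixnerWeight_natCast_add hβ c hs] using hsum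

theorem meixner_angelesco_orthogonality_general (r : ℕ) (β : ℂ)
    (hβ : ∀ m : ℕ, β ≠ -(m : ℂ)) (c : Fin r → ℂ) (hc1 : ∀ ℓ, ‖c ℓ‖ < 1)
    (n : Fin r → ℕ) (ℓ : Fin r) (j : ℕ) (hj : j < n ℓ) :
    Summable (fun k : ℕ => ‖
      (meixnerAngelesco r β c n (k : ℂ) * poch (-(k : ℂ)) j *
        (Complex.Gamma ((k : ℂ) + β) * c ℓ ^ k / (k.factorial : ℂ)))‖) ∧
    ∑' k : ℕ, meixnerAngelesco r β c n (k : ℂ) * poch (-(k : ℂ)) j *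
      (Complex.Gamma ((k : ℂ) + β) * c ℓ ^ k / (k.factorial : ℂ)) = 0 := by
  set K := Fintype.piFinset (fun i : Fin r => range (n i + 1))
  set T : (Fin r → ℕ) → ℕ → ℂ := fun κ k => poch (-k) (∑ i, κ i) *
    poch (k + β) ((∑ i, n i) - ∑ i, κ i) * poch (-k) j * meixnerWeight β (c ℓ) k
  have hterm (k : ℕ) : meixnerAngelesco r β c n k * poch (-k) j *
      (Complex.Gamma (k + β) * c ℓ ^ k / k.factorial) =
      ∑ κ ∈ K, meixnerAngelescoCoeff c n κ * T κ k := by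
    simp only [meixnerAngelesco, sum_mul]
    exact sum_congr rfl fun κ _ => by simp only [T, meixnerAngelescoCoeff, meixnerWeight]; ring
  have hT (κ : Fin r → ℕ) : Summable (T κ) := summable_poch_mul_meixnerWeight hβ (hc1 ℓ) _ _ _
  have hle (κ : Fin r → ℕ) (hκ : κ ∈ K) : ∑ i, κ i ≤ ∑ i, n i := sum_le_sum fun i _ =>
    Nat.lt_succ_iff.mp (mem_range.mp (Fintype.mem_piFinset.mp hκ i))
  simp only [hterm]
  refine ⟨summable_norm_iff.mpr (summable_sum fun κ _ => (hT κ).mul_left _), ?_⟩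
  rw [Summable.tsum_finsetSum fun κ _ => (hT κ).mul_left _]
  simp only [tsum_mul_left]
  refine (hasSum_sum fun κ hκ => (hasSum_poch_mul_meixnerWeight hβ (hc1 ℓ) (hle κ hκ) j).mul_left
    (meixnerAngelescoCoeff c n κ)).unique ?_
  convert hasSum_zero with m
  rw [sum_congr rfl fun κ _ => mul_left_comm _ _ _, ← mul_sum,
    sum_meixnerAngelescoCoeff_mul_descFactorial_mul_pow_eq_zero c n hj, mul_zero]

/-- Orthogonality of the type II Meixner--Angelesco polynomials of the
first kind: for `β` not a nonpositive integer and nonzero pairwise distinct `c_ℓ` with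
`|c_ℓ| < 1`, the series `∑_{k=0}^∞ M^{β,c}_n(k) (-k)_j Γ(k+β) c_ℓ^k / k!` converges
absolutely and equals `0` for all `0 ≤ j ≤ n_ℓ - 1`. -/
theorem meixner_angelesco_orthogonality (r : ℕ) (hr : 1 ≤ r) (β : ℂ)
    (hβ : ∀ m : ℕ, β ≠ -(m : ℂ)) (c : Fin r → ℂ) (hc0 : ∀ ℓ, c ℓ ≠ 0)
    (hdist : ∀ i j : Fin r, i ≠ j → c i ≠ c j) (hc1 : ∀ ℓ, ‖c ℓ‖ < 1)
    (n : Fin r → ℕ) (ℓ : Fin r) (j : ℕ) (hj : j < n ℓ) :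
    Summable (fun k : ℕ => ‖
      (meixnerAngelesco r β c n (k : ℂ) * poch (-(k : ℂ)) j *
        (Complex.Gamma ((k : ℂ) + β) * c ℓ ^ k / (k.factorial : ℂ)))‖) ∧
    ∑' k : ℕ, meixnerAngelesco r β c n (k : ℂ) * poch (-(k : ℂ)) j *
      (Complex.Gamma ((k : ℂ) + β) * c ℓ ^ k / (k.factorial : ℂ)) = 0 :=
  meixner_angelesco_orthogonality_general r β hβ c hc1 n ℓ j hj
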